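/- The function s(x, ρ) = x ρ^4 + ρ^2 x^{2r+1} + Σ_{i=r+1}^{N} a_i ρ^2 x^{2i+1} is a first integral of the planar system dx/dt = 2xρ^2 + x^{2r+1} + Σ_{i=r+1}^{N} a_i x^{2i+1}, dρ/dt = -(1/2)ρ^3 - ((2r+1)/2) x^{2r} ρ - Σ_{i=r+1}^{N} ((2i+1)/2) a_i x^{2i} ρ; that is, (∂s/∂x)(dx/dt) + (∂s/∂ρ)(dρ/dt) = 0 identically. -/

import Mathlib

noncomputable def pX (f : ℝ → ℝ → ℝ) (x ρ : ℝ) : ℝ := deriv (fun t => f t ρ) x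
noncomputable def pR (f : ℝ → ℝ → ℝ) (x ρ : ℝ) : ℝ := deriv (fun t => f x t) ρ

/-!
Write `s(x, ρ) = x ρ⁴ + ρ² F(x)` with `F(x) = x^{2r+1} + Σ aᵢ x^{2i+1}`. Then `∂s/∂ρ = 2ρ · ẋ` and
`∂s/∂x = -2ρ · ρ̇`, so the system is the Hamiltonian field of `s` divided by `2ρ`, along which `s`
is conserved. Only the differentiability of `F` matters; the monomials merely fix `F'`.
-/

section FirstIntegral

variable {F : ℝ → ℝ}

theorem pX_mul_pow_four_add_sq_mul {x : ℝ} (hF : DifferentiableAt ℝ F x) (ρ : ℝ) :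
    pX (fun x ρ => x * ρ ^ 4 + ρ ^ 2 * F x) x ρ = ρ ^ 4 + ρ ^ 2 * deriv F x := by
  have h : HasDerivAt (fun t => t * ρ ^ 4 + ρ ^ 2 * F t) (1 * ρ ^ 4 + ρ ^ 2 * deriv F x) x :=
    ((hasDerivAt_id x).mul_const _).add (hF.hasDerivAt.const_mul _)
  rw [pX, h.deriv, one_mul]

theorem pR_mul_pow_four_add_sq_mul (F : ℝ → ℝ) (x ρ : ℝ) :
    pR (fun x ρ => x * ρ ^ 4 + ρ ^ 2 * F x) x ρ = 4 * x * ρ ^ 3 + 2 * ρ * F x := by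
  have h : HasDerivAt (fun t => x * t ^ 4 + t ^ 2 * F x)
      (x * (↑4 * ρ ^ (4 - 1)) + ↑2 * ρ ^ (2 - 1) * F x) ρ :=
    ((hasDerivAt_pow 4 ρ).const_mul x).add ((hasDerivAt_pow 2 ρ).mul_const _)
  rw [pR, h.deriv]
  ring

theorem mul_pow_four_add_sq_mul_isFirstIntegral {x : ℝ} (hF : DifferentiableAt ℝ F x) (ρ : ℝ) :
    pX (fun x ρ => x * ρ ^ 4 + ρ ^ 2 * F x) x ρ * (2 * x * ρ ^ 2 + F x) +
      pR (fun x ρ => x * ρ ^ 4 + ρ ^ 2 * F x) x ρ *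
        (-(1 / 2) * ρ ^ 3 - (1 / 2) * deriv F x * ρ) = 0 := by
  rw [pX_mul_pow_four_add_sq_mul hF, pR_mul_pow_four_add_sq_mul]
  ring

end FirstIntegral

theorem hasDerivAt_pow_add_sum_odd_pow (r N : ℕ) (a : ℕ → ℝ) (x : ℝ) :
    HasDerivAt (fun x => x ^ (2 * r + 1) + ∑ i ∈ Finset.Icc (r + 1) N, a i * x ^ (2 * i + 1))
      ((2 * r + 1) * x ^ (2 * r) + ∑ i ∈ Finset.Icc (r + 1) N, (2 * i + 1) * a i * x ^ (2 * i))
      x := by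
  have hmono (n : ℕ) : HasDerivAt (fun x : ℝ => x ^ (2 * n + 1)) ((2 * n + 1) * x ^ (2 * n)) x := by
    simpa using hasDerivAt_pow (2 * n + 1) x
  refine (hmono r).add (HasDerivAt.fun_sum fun i _ => ?_)
  simpa only [mul_comm, mul_left_comm] using (hmono i).const_mul (a i)

theorem firstIntegral_uniqueNF_general (r N : ℕ) (a : ℕ → ℝ) :
    ∀ x ρ : ℝ,
      pX (fun x ρ => x * ρ ^ 4 + ρ ^ 2 * x ^ (2 * r + 1) +
          ∑ i ∈ Finset.Icc (r + 1) N, a i * ρ ^ 2 * x ^ (2 * i + 1)) x ρ *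
        (2 * x * ρ ^ 2 + x ^ (2 * r + 1) +
          ∑ i ∈ Finset.Icc (r + 1) N, a i * x ^ (2 * i + 1)) +
      pR (fun x ρ => x * ρ ^ 4 + ρ ^ 2 * x ^ (2 * r + 1) +
          ∑ i ∈ Finset.Icc (r + 1) N, a i * ρ ^ 2 * x ^ (2 * i + 1)) x ρ *
        (-(1 / 2) * ρ ^ 3 - ((2 * (r : ℝ) + 1) / 2) * x ^ (2 * r) * ρ -
          ∑ i ∈ Finset.Icc (r + 1) N, ((2 * (i : ℝ) + 1) / 2) * a i * x ^ (2 * i) * ρ) = 0 := by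
  intro x ρ
  set F : ℝ → ℝ := fun x => x ^ (2 * r + 1) + ∑ i ∈ Finset.Icc (r + 1) N, a i * x ^ (2 * i + 1)
  have hF := hasDerivAt_pow_add_sum_odd_pow r N a x
  have hs : (fun x ρ => x * ρ ^ 4 + ρ ^ 2 * x ^ (2 * r + 1) +
      ∑ i ∈ Finset.Icc (r + 1) N, a i * ρ ^ 2 * x ^ (2 * i + 1)) =
      fun x ρ => x * ρ ^ 4 + ρ ^ 2 * F x := by
    funext x ρ
    simp only [F, mul_add, Finset.mul_sum, add_assoc, mul_left_comm (ρ ^ 2), mul_assoc]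
  have hρ : ∑ i ∈ Finset.Icc (r + 1) N, ((2 * (i : ℝ) + 1) / 2) * a i * x ^ (2 * i) * ρ =
      (1 / 2) * (∑ i ∈ Finset.Icc (r + 1) N, (2 * i + 1) * a i * x ^ (2 * i)) * ρ := by
    rw [Finset.mul_sum, Finset.sum_mul]
    exact Finset.sum_congr rfl fun i _ => by ring
  have key := mul_pow_four_add_sq_mul_isFirstIntegral hF.differentiableAt ρ
  rw [hF.deriv] at key
  rw [hs, hρ, add_assoc (2 * x * ρ ^ 2)]
  linear_combination key

/-- `s(x,ρ) = xρ⁴ + ρ² x^{2r+1} + Σ_{i=r+1}^N aᵢ ρ² x^{2i+1}` is a first integral of the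
planar system `dx/dt = 2xρ² + x^{2r+1} + Σ aᵢ x^{2i+1}`,
`dρ/dt = -(1/2)ρ³ - ((2r+1)/2) x^{2r} ρ - Σ ((2i+1)/2) aᵢ x^{2i} ρ`. -/
theorem firstIntegral_uniqueNF (r N : ℕ) (hr : 0 < r) (hN : r + 1 ≤ N) (a : ℕ → ℝ) :
    ∀ x ρ : ℝ,
      pX (fun x ρ => x * ρ ^ 4 + ρ ^ 2 * x ^ (2 * r + 1) +
          ∑ i ∈ Finset.Icc (r + 1) N, a i * ρ ^ 2 * x ^ (2 * i + 1)) x ρ *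
        (2 * x * ρ ^ 2 + x ^ (2 * r + 1) +
          ∑ i ∈ Finset.Icc (r + 1) N, a i * x ^ (2 * i + 1)) +
      pR (fun x ρ => x * ρ ^ 4 + ρ ^ 2 * x ^ (2 * r + 1) +
          ∑ i ∈ Finset.Icc (r + 1) N, a i * ρ ^ 2 * x ^ (2 * i + 1)) x ρ *
        (-(1 / 2) * ρ ^ 3 - ((2 * (r : ℝ) + 1) / 2) * x ^ (2 * r) * ρ -
          ∑ i ∈ Finset.Icc (r + 1) N, ((2 * (i : ℝ) + 1) / 2) * a i * x ^ (2 * i) * ρ) = 0 :=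
  firstIntegral_uniqueNF_general r N a
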